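/- Hardy–Littlewood-type comparison underlying sub-additivity: for any x, y ∈ ℝ^N and any nonincreasing nonnegative weights φ₁ ≥ … ≥ φ_N ≥ 0, Σᵢ φᵢ (x+y)_{(i)} ≥ Σᵢ φᵢ x_{(i)} + Σᵢ φᵢ y_{(i)}, where z_{(1)} ≤ … ≤ z_{(N)} denotes the increasing rearrangement of z. -/

import Mathlib

open MeasureTheory

/-- The increasing rearrangement (order statistics) of `x`. -/
noncomputable def srt {N : ℕ} (x : Fin N → ℝ) : Fin N → ℝ := x ∘ Tuple.sort x

/-!
By the rearrangement inequality, pairing the nonincreasing weights `φ` with the increasing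
rearrangement of a vector `z` minimizes `∑ i, φ i * z (σ i)` over all permutations `σ`. The left-hand side
is thus a sum of two minima, while the right-hand side evaluates both sums at the single
permutation sorting `x + y`.
-/

lemma monotone_srt {N : ℕ} (x : Fin N → ℝ) : Monotone (srt x) :=
  Tuple.monotone_sort x

lemma srt_comp_perm {N : ℕ} (x : Fin N → ℝ) (σ : Equiv.Perm (Fin N)) :
    x ∘ σ = srt x ∘ ((Tuple.sort x)⁻¹ * σ) := by
  ext i
  simp [srt]

lemma sum_mul_srt_le_sum_mul_comp_perm {N : ℕ} {φ : Fin N → ℝ} (hφ : Antitone φ)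
    (x : Fin N → ℝ) (σ : Equiv.Perm (Fin N)) :
    ∑ i, φ i * srt x i ≤ ∑ i, φ i * x (σ i) := by
  have hx : ∀ i, x (σ i) = srt x (((Tuple.sort x)⁻¹ * σ) i) :=
    congrFun (srt_comp_perm x σ)
  simp only [hx]
  exact (hφ.antivary (monotone_srt x)).sum_mul_le_sum_mul_comp_perm

theorem hardy_littlewood_comparison_general {N : ℕ} (φ : Fin N → ℝ)
    (hdec : ∀ i j : Fin N, i ≤ j → φ j ≤ φ i)
    (x y : Fin N → ℝ) :
    (∑ i, φ i * srt x i) + ∑ i, φ i * srt y i ≤ ∑ i, φ i * srt (x + y) i := by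
  have hφ : Antitone φ := fun i j hij => hdec i j hij
  set σ := Tuple.sort (x + y)
  calc (∑ i, φ i * srt x i) + ∑ i, φ i * srt y i
      ≤ (∑ i, φ i * x (σ i)) + ∑ i, φ i * y (σ i) :=
        add_le_add (sum_mul_srt_le_sum_mul_comp_perm hφ x σ)
          (sum_mul_srt_le_sum_mul_comp_perm hφ y σ)
    _ = ∑ i, φ i * srt (x + y) i := by
        simp only [srt, Function.comp_apply, Pi.add_apply, mul_add, Finset.sum_add_distrib, σ]

theorem hardy_littlewood_comparison {N : ℕ} (φ : Fin N → ℝ)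
    (hpos : ∀ i, 0 ≤ φ i) (hdec : ∀ i j : Fin N, i ≤ j → φ j ≤ φ i)
    (x y : Fin N → ℝ) :
    (∑ i, φ i * srt x i) + ∑ i, φ i * srt y i ≤ ∑ i, φ i * srt (x + y) i :=
  hardy_littlewood_comparison_general φ hdec x y
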